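/- Let (A,B,R,σ) be a normalized context whose concept lattice M satisfies the ascending chain condition. Then (A,B,R,σ) has a decomposition into independent subcontexts if and only if M has a decomposition into independent blocks. -/

import Mathlib

/-- A multi-adjoint frame together with a formal context `(A, B, R, σ)`.
`conj i`, `limp i`, `rimp i` form an adjoint triple on the complete lattice `L` for each
index `i : I`, and each conjunctor satisfies the boundary condition
`x & ⊤ = ⊤ & x = x`. -/
structure FCAContext (L : Type*) [CompleteLattice L] (I A B : Type*) where
  conj : I → L → L → L
  limp : I → L → L → L
  rimp : I → L → L → L
  R : A → B → L
  sig : A → B → I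
  adjoint_left : ∀ i x y z, x ≤ limp i z y ↔ conj i x y ≤ z
  adjoint_right : ∀ i x y z, conj i x y ≤ z ↔ y ≤ rimp i z x
  boundary_left : ∀ i x, conj i ⊤ x = x
  boundary_right : ∀ i x, conj i x ⊤ = x

namespace FCAContext

variable {L I A B : Type*} [CompleteLattice L]

open Classical in
/-- The fuzzy-attribute `φ_{a,x}`. -/
noncomputable def phiA (a : A) (x : L) : A → L :=
  fun a' => if a' = a then x else ⊥

open Classical in
/-- The fuzzy-object `φ_{b,y}`. -/
noncomputable def phiB (b : B) (y : L) : B → L :=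
  fun b' => if b' = b then y else ⊥

/-- The pair `⟨g_⊤, f_⊥⟩` (the top of the concept lattice of a normalized context). -/
def topC : (B → L) × (A → L) := (fun _ => (⊤ : L), fun _ => (⊥ : L))

/-- The pair `⟨g_⊥, f_⊤⟩` (the bottom of the concept lattice of a normalized context). -/
def botC : (B → L) × (A → L) := (fun _ => (⊥ : L), fun _ => (⊤ : L))

/-- The order on concepts: `⟨g₁,f₁⟩ ⪯ ⟨g₂,f₂⟩ iff g₁ ≤ g₂` pointwise. -/
def cle (c d : (B → L) × (A → L)) : Prop := c.1 ≤ d.1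

variable (C : FCAContext L I A B)

/-- The derivation operator `↑` on fuzzy sets of objects:
`g↑(a) = ⨅_b R(a,b) ↙^{σ(a,b)} g(b)`. -/
def up (g : B → L) : A → L := fun a => ⨅ b, C.limp (C.sig a b) (C.R a b) (g b)

/-- The derivation operator `↓` on fuzzy sets of attributes:
`f↓(b) = ⨅_a R(a,b) ↖_{σ(a,b)} f(a)`. -/
def down (f : A → L) : B → L := fun b => ⨅ a, C.rimp (C.sig a b) (C.R a b) (f a)

/-- The concept lattice `M`: pairs `⟨g, f⟩` with `g↑ = f` and `f↓ = g`. -/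
def concepts : Set ((B → L) × (A → L)) :=
  {c | C.up c.1 = c.2 ∧ C.down c.2 = c.1}

/-- The pair `⟨φ_{a,x}↓, φ_{a,x}↓↑⟩` generated by a fuzzy-attribute. -/
noncomputable def attrConcept (a : A) (x : L) : (B → L) × (A → L) :=
  (C.down (phiA a x), C.up (C.down (phiA a x)))

/-- The pair `⟨φ_{b,y}↑↓, φ_{b,y}↑⟩` generated by a fuzzy-object. -/
noncomputable def objConcept (b : B) (y : L) : (B → L) × (A → L) :=
  (C.down (C.up (phiB b y)), C.up (phiB b y))

/-- A context is *normalized* when every attribute is related to some object with a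
non-bottom value and to some object with the bottom value, and symmetrically for
objects. -/
def Normalized : Prop :=
  (∀ a : A, ∃ b : B, C.R a b ≠ ⊥) ∧ (∀ a : A, ∃ b : B, C.R a b = ⊥) ∧
  (∀ b : B, ∃ a : A, C.R a b ≠ ⊥) ∧ (∀ b : B, ∃ a : A, C.R a b = ⊥)

/-- The conjunctor associated with the index `i` has no zero-divisors. -/
def NoZeroDiv (i : I) : Prop :=
  ∀ x y : L, x ≠ ⊥ → y ≠ ⊥ → C.conj i x y ≠ ⊥

/-- `(Y, X)` is a *separable subcontext* of the context. -/
def SeparableSubcontext (Y : Set A) (X : Set B) : Prop :=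
  Y.Nonempty ∧ X.Nonempty ∧ Y ≠ Set.univ ∧ X ≠ Set.univ ∧
  (∃ a ∈ Y, ∃ b ∈ X, C.R a b ≠ ⊥) ∧
  (∀ a ∈ Y, ∀ b ∉ X, C.R a b = ⊥) ∧
  (∀ a ∉ Y, ∀ b ∈ X, C.R a b = ⊥)

/-- A family `{(Afam l, Bfam l)}_{l : Λ}` is a *decomposition into independent
subcontexts* of the context. -/
def SubcontextDecomposition {Λ : Type*} (Afam : Λ → Set A) (Bfam : Λ → Set B) : Prop :=
  Nonempty Λ ∧
  (∀ l, C.SeparableSubcontext (Afam l) (Bfam l)) ∧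
  (∀ l m, l ≠ m → Disjoint (Afam l) (Afam m)) ∧
  (∀ l m, l ≠ m → Disjoint (Bfam l) (Bfam m)) ∧
  (⋃ l, Afam l) = Set.univ ∧ (⋃ l, Bfam l) = Set.univ ∧
  (∀ l, ∀ a ∉ Afam l, ∀ b ∈ Bfam l, C.NoZeroDiv (C.sig a b)) ∧
  (∀ l, ∀ a ∈ Afam l, ∀ b ∉ Bfam l, C.NoZeroDiv (C.sig a b))

/-- The meet of two concepts in the concept lattice: the extent is the pointwise
infimum of the extents. -/
def cmeet (c d : (B → L) × (A → L)) : (B → L) × (A → L) :=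
  (c.1 ⊓ d.1, C.up (c.1 ⊓ d.1))

/-- The join of two concepts in the concept lattice: the intent is the pointwise
infimum of the intents. -/
def cjoin (c d : (B → L) × (A → L)) : (B → L) × (A → L) :=
  (C.down (c.2 ⊓ d.2), c.2 ⊓ d.2)

/-- A concept is *meet-irreducible* in the concept lattice `M` if it is not the top of
`M` (its extent is not `g_⊤`) and whenever it is the meet of two concepts it equals one
of them. -/
def MeetIrred (m : (B → L) × (A → L)) : Prop :=
  m ∈ C.concepts ∧ m.1 ≠ (fun _ => (⊤ : L)) ∧
  ∀ c d, c ∈ C.concepts → d ∈ C.concepts → m.1 = c.1 ⊓ d.1 → m = c ∨ m = d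

/-- `M_F^{A'}`: the meet-irreducible concepts generated by fuzzy-attributes with
attribute in `A'`. -/
noncomputable def MF (A' : Set A) : Set ((B → L) × (A → L)) :=
  {m | C.MeetIrred m ∧ ∃ a ∈ A', ∃ x : L, m = C.attrConcept a x}

/-- `M_g^{A'}`: the elements of `M_F^{A'}` above the concept with extent `g`. -/
noncomputable def Mg (g : B → L) (A' : Set A) : Set ((B → L) × (A → L)) :=
  {m ∈ C.MF A' | g ≤ m.1}

/-- The concept lattice satisfies the ascending chain condition. -/
def ACC : Prop :=
  ∀ c : ℕ → (B → L) × (A → L), (∀ n, c n ∈ C.concepts) →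
    (∀ n, cle (c n) (c (n + 1))) → ∃ n, ∀ m, n ≤ m → c m = c n

/-- `K` is a *block of concepts* of the concept lattice `M`: a sublattice of `M`,
different from `M`, containing some concept other than the top `⟨g_⊤,f_⊥⟩` and the
bottom `⟨g_⊥,f_⊤⟩`, and closed under comparability except for the top and the bottom. -/
def IsBlockM (K : Set ((B → L) × (A → L))) : Prop :=
  K ⊆ C.concepts ∧ K ≠ C.concepts ∧
  (K \ ({topC, botC} : Set ((B → L) × (A → L)))).Nonempty ∧
  (∀ c ∈ K, ∀ d ∈ K, C.cmeet c d ∈ K ∧ C.cjoin c d ∈ K) ∧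
  ∀ k ∈ K \ ({topC, botC} : Set ((B → L) × (A → L))), ∀ c ∈ C.concepts,
    (cle k c ∨ cle c k) →
    c ∉ ({topC, botC} : Set ((B → L) × (A → L))) → c ∈ K

/-- A complete block of concepts: a block containing the top and the bottom of `M`. -/
def IsCompleteBlockM (K : Set ((B → L) × (A → L))) : Prop :=
  C.IsBlockM K ∧ topC ∈ K ∧ botC ∈ K

/-- A family `{K l}_{l : Λ}` is a *decomposition into independent blocks* of the
concept lattice `M`. -/
def BlockDecomposition {Λ : Type*} (K : Λ → Set ((B → L) × (A → L))) : Prop :=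
  Nonempty Λ ∧ (∀ l, C.IsBlockM (K l)) ∧
  (∀ l m, l ≠ m → K l ∩ K m ⊆ ({topC, botC} : Set ((B → L) × (A → L)))) ∧
  (⋃ l, K l) = C.concepts

/-- The block of concepts `K_λ` determined by a set of attributes `A'`:
the concepts which are the infimum of `M_g^{A'}`, together with the top and the
bottom of `M`. -/
noncomputable def Kblock (A' : Set A) : Set ((B → L) × (A → L)) :=
  {c ∈ C.concepts | c.1 = ⨅ m ∈ C.Mg c.1 A', m.1} ∪
    ({topC, botC} : Set ((B → L) × (A → L)))

/-- The set of attributes `A_μ` associated with a block of concepts `K`. -/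
noncomputable def Amu (K : Set ((B → L) × (A → L))) : Set A :=
  {a | ∃ x : L, C.attrConcept a x ∈
    K \ ({topC, botC} : Set ((B → L) × (A → L)))}

/-- The set of objects `B_μ` associated with a block of concepts `K`. -/
noncomputable def Bmu (K : Set ((B → L) × (A → L))) : Set B :=
  {b | ∃ y : L, C.objConcept b y ∈
    K \ ({topC, botC} : Set ((B → L) × (A → L)))}

end FCAContext

namespace FCAContext

section Aux

variable {L I A B : Type*} [CompleteLattice L] (C : FCAContext L I A B)

lemma conj_mono_left {i : I} {x x' : L} (h : x ≤ x') (y : L) :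
    C.conj i x y ≤ C.conj i x' y := by
  have h1 : x' ≤ C.limp i (C.conj i x' y) y := (C.adjoint_left i x' y _).mpr le_rfl
  exact (C.adjoint_left i x y _).mp (h.trans h1)

lemma conj_mono_right {i : I} (x : L) {y y' : L} (h : y ≤ y') :
    C.conj i x y ≤ C.conj i x y' := by
  have h1 : y' ≤ C.rimp i (C.conj i x y') x := (C.adjoint_right i x y' _).mp le_rfl
  exact (C.adjoint_right i x y _).mpr (h.trans h1)

lemma conj_bot_left (i : I) (y : L) : C.conj i ⊥ y = ⊥ :=
  le_antisymm ((C.adjoint_left i ⊥ y ⊥).mp bot_le) bot_le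

lemma conj_bot_right (i : I) (x : L) : C.conj i x ⊥ = ⊥ :=
  le_antisymm ((C.adjoint_right i x ⊥ ⊥).mpr bot_le) bot_le

lemma limp_bot_right (i : I) (z : L) : C.limp i z ⊥ = ⊤ :=
  le_antisymm le_top ((C.adjoint_left i ⊤ ⊥ z).mpr (by rw [C.boundary_left]; exact bot_le))

lemma rimp_bot_right (i : I) (z : L) : C.rimp i z ⊥ = ⊤ :=
  le_antisymm le_top ((C.adjoint_right i ⊥ ⊤ z).mp (by rw [C.boundary_right]; exact bot_le))

lemma rimp_top_right (i : I) (z : L) : C.rimp i z ⊤ = z := by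
  apply le_antisymm
  · have := (C.adjoint_right i ⊤ (C.rimp i z ⊤) z).mpr le_rfl
    rwa [C.boundary_left] at this
  · exact (C.adjoint_right i ⊤ z z).mp (by rw [C.boundary_left])

lemma le_rimp_self (i : I) (z x : L) : z ≤ C.rimp i z x := by
  refine (C.adjoint_right i x z z).mp ?_
  calc C.conj i x z ≤ C.conj i ⊤ z := C.conj_mono_left le_top z
  _ = z := C.boundary_left i z

lemma rimp_eq_top_iff {i : I} {z x : L} : C.rimp i z x = ⊤ ↔ x ≤ z := by
  constructor
  · intro h
    have := (C.adjoint_right i x ⊤ z).mpr (h ▸ le_rfl)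
    rwa [C.boundary_right] at this
  · intro h
    refine le_antisymm le_top ((C.adjoint_right i x ⊤ z).mp ?_)
    rw [C.boundary_right]; exact h

lemma limp_top_right (i : I) (z : L) : C.limp i z ⊤ = z := by
  apply le_antisymm
  · have := (C.adjoint_left i (C.limp i z ⊤) ⊤ z).mp le_rfl
    rwa [C.boundary_right] at this
  · exact (C.adjoint_left i z ⊤ z).mpr (by rw [C.boundary_right])

lemma limp_bot_of_noZeroDiv {i : I} (hi : C.NoZeroDiv i) {y : L} (hy : y ≠ ⊥) :
    C.limp i ⊥ y = ⊥ := by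
  by_contra h
  have h1 : C.conj i (C.limp i ⊥ y) y ≤ ⊥ := (C.adjoint_left i _ y ⊥).mp le_rfl
  exact hi _ _ h hy (le_bot_iff.mp h1)

lemma rimp_ne_bot_of_conj_eq_bot {i : I} {x y : L} (hy : y ≠ ⊥)
    (h : C.conj i x y = ⊥) : C.rimp i ⊥ x ≠ ⊥ := by
  have : y ≤ C.rimp i ⊥ x := (C.adjoint_right i x y ⊥).mp (le_of_eq h)
  exact fun hb => hy (le_bot_iff.mp (hb ▸ this))

lemma le_up_iff {f : A → L} {g : B → L} :
    f ≤ C.up g ↔ ∀ a b, C.conj (C.sig a b) (f a) (g b) ≤ C.R a b := by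
  constructor
  · intro h a b
    exact (C.adjoint_left _ _ _ _).mp ((h a).trans (iInf_le _ b))
  · intro h a
    exact le_iInf fun b => (C.adjoint_left _ _ _ _).mpr (h a b)

lemma le_down_iff {f : A → L} {g : B → L} :
    g ≤ C.down f ↔ ∀ a b, C.conj (C.sig a b) (f a) (g b) ≤ C.R a b := by
  constructor
  · intro h a b
    exact (C.adjoint_right _ _ _ _).mpr ((h b).trans (iInf_le _ a))
  · intro h b
    exact le_iInf fun a => (C.adjoint_right _ _ _ _).mp (h a b)

lemma galois {f : A → L} {g : B → L} : f ≤ C.up g ↔ g ≤ C.down f := by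
  rw [C.le_up_iff, C.le_down_iff]

lemma le_down_up (g : B → L) : g ≤ C.down (C.up g) := C.galois.mp le_rfl

lemma le_up_down (f : A → L) : f ≤ C.up (C.down f) := C.galois.mpr le_rfl

lemma up_anti {g g' : B → L} (h : g ≤ g') : C.up g' ≤ C.up g :=
  C.galois.mpr (h.trans (C.le_down_up g'))

lemma down_anti {f f' : A → L} (h : f ≤ f') : C.down f' ≤ C.down f :=
  C.galois.mp (h.trans (C.le_up_down f'))

lemma down_up_down (f : A → L) : C.down (C.up (C.down f)) = C.down f :=
  le_antisymm (C.down_anti (C.le_up_down f)) (C.le_down_up _)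

lemma up_down_up (g : B → L) : C.up (C.down (C.up g)) = C.up g :=
  le_antisymm (C.up_anti (C.le_down_up g)) (C.le_up_down _)

lemma up_bot_fun (hn : C.Normalized) : C.up (fun _ => (⊤ : L)) = fun _ => (⊥ : L) := by
  funext a
  obtain ⟨b0, hb0⟩ := hn.2.1 a
  refine le_antisymm ?_ bot_le
  calc C.up (fun _ => (⊤ : L)) a ≤ C.limp (C.sig a b0) (C.R a b0) ⊤ := iInf_le _ b0
  _ = C.R a b0 := C.limp_top_right _ _
  _ = ⊥ := hb0

lemma down_bot_fun : C.down (fun _ => (⊥ : L)) = fun _ => (⊤ : L) := by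
  funext b
  simp [down, rimp_bot_right]

lemma up_bot_fun' : C.up (fun _ => (⊥ : L)) = fun _ => (⊤ : L) := by
  funext a
  simp [up, limp_bot_right]

lemma down_top_fun (hn : C.Normalized) : C.down (fun _ => (⊤ : L)) = fun _ => (⊥ : L) := by
  funext b
  obtain ⟨a0, ha0⟩ := hn.2.2.2 b
  refine le_antisymm ?_ bot_le
  calc C.down (fun _ => (⊤ : L)) b ≤ C.rimp (C.sig a0 b) (C.R a0 b) ⊤ := iInf_le _ a0
  _ = C.R a0 b := C.rimp_top_right _ _
  _ = ⊥ := ha0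

lemma topC_mem (hn : C.Normalized) : (topC : (B → L) × (A → L)) ∈ C.concepts :=
  ⟨C.up_bot_fun hn, C.down_bot_fun⟩

lemma botC_mem (hn : C.Normalized) : (botC : (B → L) × (A → L)) ∈ C.concepts :=
  ⟨C.up_bot_fun', C.down_top_fun hn⟩

lemma concept_ext {c d : (B → L) × (A → L)} (hc : c ∈ C.concepts) (hd : d ∈ C.concepts)
    (h : c.1 = d.1) : c = d := by
  have : c.2 = d.2 := by rw [← hc.1, ← hd.1, h]
  exact Prod.ext h this

lemma intent_eq_bot {c : (B → L) × (A → L)} (hc : c ∈ C.concepts)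
    (h : c.2 = fun _ => (⊥ : L)) : c = topC := by
  have h1 : c.1 = fun _ => (⊤ : L) := by rw [← hc.2, h, down_bot_fun]
  exact Prod.ext h1 h

lemma extent_eq_bot {c : (B → L) × (A → L)} (hc : c ∈ C.concepts)
    (h : c.1 = fun _ => (⊥ : L)) : c = botC := by
  have h2 : c.2 = fun _ => (⊤ : L) := by rw [← hc.1, h, up_bot_fun']
  exact Prod.ext h h2

lemma eq_topC_of_le {c : (B → L) × (A → L)} (hc : c ∈ C.concepts) (hn : C.Normalized)
    (h : cle topC c) : c = topC := by
  refine C.concept_ext hc (C.topC_mem hn) (funext fun b => ?_)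
  exact le_antisymm le_top (h b)

lemma eq_botC_of_le {c : (B → L) × (A → L)} (hc : c ∈ C.concepts) (hn : C.Normalized)
    (h : cle c botC) : c = botC := by
  refine C.concept_ext hc (C.botC_mem hn) (funext fun b => ?_)
  exact le_antisymm (h b) bot_le

lemma cmeet_mem {c d : (B → L) × (A → L)} (hc : c ∈ C.concepts) (hd : d ∈ C.concepts) :
    C.cmeet c d ∈ C.concepts := by
  refine ⟨rfl, ?_⟩
  have hcc : C.down (C.up c.1) = c.1 := by rw [hc.1, hc.2]
  have hdc : C.down (C.up d.1) = d.1 := by rw [hd.1, hd.2]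
  refine le_antisymm (le_inf ?_ ?_) (C.le_down_up _)
  · calc C.down (C.up (c.1 ⊓ d.1)) ≤ C.down (C.up c.1) :=
          C.down_anti (C.up_anti inf_le_left)
    _ = c.1 := hcc
  · calc C.down (C.up (c.1 ⊓ d.1)) ≤ C.down (C.up d.1) :=
          C.down_anti (C.up_anti inf_le_right)
    _ = d.1 := hdc

lemma cjoin_mem {c d : (B → L) × (A → L)} (hc : c ∈ C.concepts) (hd : d ∈ C.concepts) :
    C.cjoin c d ∈ C.concepts := by
  refine ⟨?_, rfl⟩
  have hcc : C.up (C.down c.2) = c.2 := by rw [hc.2, hc.1]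
  have hdc : C.up (C.down d.2) = d.2 := by rw [hd.2, hd.1]
  refine le_antisymm (le_inf ?_ ?_) (C.le_up_down _)
  · calc C.up (C.down (c.2 ⊓ d.2)) ≤ C.up (C.down c.2) :=
          C.up_anti (C.down_anti inf_le_left)
    _ = c.2 := hcc
  · calc C.up (C.down (c.2 ⊓ d.2)) ≤ C.up (C.down d.2) :=
          C.up_anti (C.down_anti inf_le_right)
    _ = d.2 := hdc

lemma down_phiA (a : A) (x : L) :
    C.down (phiA a x) = fun b => C.rimp (C.sig a b) (C.R a b) x := by
  classical
  funext b
  refine le_antisymm ?_ (le_iInf fun a' => ?_)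
  · refine (iInf_le _ a).trans ?_
    simp [phiA]
  · by_cases h : a' = a
    · subst h; simp [phiA]
    · simp [phiA, h, rimp_bot_right]

lemma up_phiB (b : B) (y : L) :
    C.up (phiB b y) = fun a => C.limp (C.sig a b) (C.R a b) y := by
  classical
  funext a
  refine le_antisymm ?_ (le_iInf fun b' => ?_)
  · refine (iInf_le _ b).trans ?_
    simp [phiB]
  · by_cases h : b' = b
    · subst h; simp [phiB]
    · simp [phiB, h, limp_bot_right]

lemma attrConcept_mem (a : A) (x : L) : C.attrConcept a x ∈ C.concepts :=
  ⟨rfl, C.down_up_down _⟩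

lemma objConcept_mem (b : B) (y : L) : C.objConcept b y ∈ C.concepts :=
  ⟨C.up_down_up _, rfl⟩

lemma attrConcept_fst (a : A) (x : L) :
    (C.attrConcept a x).1 = fun b => C.rimp (C.sig a b) (C.R a b) x := C.down_phiA a x

lemma attrConcept_top_fst (a : A) :
    (C.attrConcept a ⊤).1 = fun b => C.R a b := by
  rw [C.attrConcept_fst]
  funext b
  exact C.rimp_top_right _ _

lemma objConcept_snd (b : B) (y : L) :
    (C.objConcept b y).2 = fun a => C.limp (C.sig a b) (C.R a b) y := C.up_phiB b y

lemma objConcept_top_snd (b : B) :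
    (C.objConcept b ⊤).2 = fun a => C.R a b := by
  rw [C.objConcept_snd]
  funext a
  exact C.limp_top_right _ _

lemma objConcept_top_fst_self (b : B) : (C.objConcept b ⊤).1 b = ⊤ := by
  classical
  refine le_antisymm le_top ?_
  have h := C.le_down_up (phiB b (⊤ : L))
  have := h b
  simpa [phiB, objConcept] using this

lemma bot_ne_top [Nonempty A] (hn : C.Normalized) : (⊥ : L) ≠ ⊤ := by
  intro h
  obtain ⟨b, hb⟩ := hn.1 (Classical.arbitrary A)
  exact hb (le_antisymm (le_of_le_of_eq le_top h.symm) bot_le)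

lemma attrConcept_top_ne_topC [Nonempty A] (hn : C.Normalized) (a : A) :
    C.attrConcept a ⊤ ≠ topC := by
  intro h
  obtain ⟨b0, hb0⟩ := hn.2.1 a
  have := congrFun (congrArg Prod.fst h) b0
  rw [C.attrConcept_top_fst] at this
  exact C.bot_ne_top hn (hb0 ▸ this)

lemma attrConcept_top_ne_botC (hn : C.Normalized) (a : A) :
    C.attrConcept a ⊤ ≠ botC := by
  intro h
  obtain ⟨b0, hb0⟩ := hn.1 a
  have := congrFun (congrArg Prod.fst h) b0
  rw [C.attrConcept_top_fst] at this
  exact hb0 this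

lemma objConcept_top_ne_topC (hn : C.Normalized) (b : B) :
    C.objConcept b ⊤ ≠ topC := by
  intro h
  obtain ⟨a0, ha0⟩ := hn.2.2.1 b
  have := congrFun (congrArg Prod.snd h) a0
  rw [C.objConcept_top_snd] at this
  exact ha0 this

lemma objConcept_top_ne_botC [Nonempty A] (hn : C.Normalized) (b : B) :
    C.objConcept b ⊤ ≠ botC := by
  intro h
  obtain ⟨a0, ha0⟩ := hn.2.2.2 b
  have := congrFun (congrArg Prod.snd h) a0
  rw [C.objConcept_top_snd] at this
  exact C.bot_ne_top hn (ha0 ▸ this)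

lemma cle_attrConcept_of_intent {c : (B → L) × (A → L)} (hc : c ∈ C.concepts) (a : A) :
    cle c (C.attrConcept a (c.2 a)) := by
  classical
  have h : phiA a (c.2 a) ≤ c.2 := by
    intro a'
    by_cases h : a' = a
    · subst h; simp [phiA]
    · simp [phiA, h]
  have := C.down_anti h
  rw [hc.2] at this
  exact this

lemma cle_attrConcept_top (a : A) (x : L) :
    cle (C.attrConcept a ⊤) (C.attrConcept a x) := by
  rw [cle, C.attrConcept_top_fst, C.attrConcept_fst]
  intro b
  exact C.le_rimp_self _ _ _

/-- The block of concepts supported on a set of objects `Bf`, plus top and bottom. -/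
def KP (Bf : Set B) : Set ((B → L) × (A → L)) :=
  {c | c ∈ C.concepts ∧ ∀ b ∉ Bf, c.1 b = ⊥} ∪ {topC, botC}

lemma topC_mem_KP (Bf : Set B) : (topC : (B → L) × (A → L)) ∈ C.KP Bf :=
  Or.inr (Or.inl rfl)

lemma botC_mem_KP (Bf : Set B) : (botC : (B → L) × (A → L)) ∈ C.KP Bf :=
  Or.inr (Or.inr rfl)

lemma KP_subset (hn : C.Normalized) (Bf : Set B) : C.KP Bf ⊆ C.concepts := by
  rintro c (hc | hc | hc)
  · exact hc.1
  · exact hc ▸ C.topC_mem hn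
  · exact hc ▸ C.botC_mem hn

lemma mem_KP_of_supp {c : (B → L) × (A → L)} (hc : c ∈ C.concepts) {Bf : Set B}
    (h : ∀ b ∉ Bf, c.1 b = ⊥) : c ∈ C.KP Bf := Or.inl ⟨hc, h⟩

lemma mem_KP_elim {c : (B → L) × (A → L)} {Bf : Set B} (h : c ∈ C.KP Bf) :
    c = topC ∨ c = botC ∨ (c ∈ C.concepts ∧ ∀ b ∉ Bf, c.1 b = ⊥) := by
  rcases h with h | h | h
  · exact Or.inr (Or.inr h)
  · exact Or.inl h
  · exact Or.inr (Or.inl h)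

lemma cmeet_topC_left {d : (B → L) × (A → L)} (hd : d ∈ C.concepts) :
    C.cmeet topC d = d := by
  have h : (topC : (B → L) × (A → L)).1 ⊓ d.1 = d.1 := by
    funext b; exact top_inf_eq _
  rw [cmeet, h, hd.1]

lemma cmeet_topC_right {c : (B → L) × (A → L)} (hc : c ∈ C.concepts) :
    C.cmeet c topC = c := by
  have h : c.1 ⊓ (topC : (B → L) × (A → L)).1 = c.1 := by
    funext b; exact inf_top_eq _
  rw [cmeet, h, hc.1]

lemma cjoin_botC_left {d : (B → L) × (A → L)} (hd : d ∈ C.concepts) :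
    C.cjoin botC d = d := by
  have h : (botC : (B → L) × (A → L)).2 ⊓ d.2 = d.2 := by
    funext a; exact top_inf_eq _
  rw [cjoin, h, hd.2]

lemma cjoin_botC_right {c : (B → L) × (A → L)} (hc : c ∈ C.concepts) :
    C.cjoin c botC = c := by
  have h : c.2 ⊓ (botC : (B → L) × (A → L)).2 = c.2 := by
    funext a; exact inf_top_eq _
  rw [cjoin, h, hc.2]

lemma cjoin_topC_left (d : (B → L) × (A → L)) : C.cjoin topC d = topC := by
  have h : (topC : (B → L) × (A → L)).2 ⊓ d.2 = fun _ => (⊥ : L) := by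
    funext a; exact bot_inf_eq _
  rw [cjoin, h, C.down_bot_fun]; rfl

lemma cjoin_topC_right (c : (B → L) × (A → L)) : C.cjoin c topC = topC := by
  have h : c.2 ⊓ (topC : (B → L) × (A → L)).2 = fun _ => (⊥ : L) := by
    funext a; exact inf_bot_eq _
  rw [cjoin, h, C.down_bot_fun]; rfl

lemma cle_cjoin_left {c d : (B → L) × (A → L)} (hc : c ∈ C.concepts) :
    cle c (C.cjoin c d) := by
  show c.1 ≤ C.down (c.2 ⊓ d.2)
  rw [← hc.2]
  exact C.down_anti inf_le_left

lemma extent_ne_bot {c : (B → L) × (A → L)} (hc : c ∈ C.concepts) (h : c ≠ botC) :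
    ∃ b, c.1 b ≠ ⊥ := by
  by_contra hb
  push_neg at hb
  exact h (C.extent_eq_bot hc (funext fun b => le_antisymm (le_of_eq (hb b)) bot_le))

lemma intent_ne_bot {c : (B → L) × (A → L)} (hc : c ∈ C.concepts) (h : c ≠ topC) :
    ∃ a, c.2 a ≠ ⊥ := by
  by_contra ha
  push_neg at ha
  exact h (C.intent_eq_bot hc (funext fun a => ha a))

section Forward

variable {Λ : Type*} {Afam : Λ → Set A} {Bfam : Λ → Set B}

/-- Key lemma: a concept whose extent is non-bottom on two different independent
subcontexts is the top concept. -/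
lemma eq_topC_of_two_blocks (hd : C.SubcontextDecomposition Afam Bfam)
    {c : (B → L) × (A → L)} (hc : c ∈ C.concepts) {l m : Λ} (hlm : l ≠ m)
    {b0 b1 : B} (hb0 : b0 ∈ Bfam l) (hb1 : b1 ∈ Bfam m)
    (h0 : c.1 b0 ≠ ⊥) (h1 : c.1 b1 ≠ ⊥) : c = topC := by
  obtain ⟨hne, hsep, hdA, hdB, hUA, hUB, hz1, hz2⟩ := hd
  have h2 : c.2 = fun _ => (⊥ : L) := by
    funext a
    have ha : a ∈ ⋃ k, Afam k := hUA ▸ Set.mem_univ a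
    obtain ⟨k, hk⟩ := Set.mem_iUnion.mp ha
    obtain ⟨l', b', hkl', hb', hcb'⟩ : ∃ l' b', k ≠ l' ∧ b' ∈ Bfam l' ∧ c.1 b' ≠ ⊥ := by
      by_cases hkl : k = l
      · exact ⟨m, b1, hkl ▸ hlm, hb1, h1⟩
      · exact ⟨l, b0, hkl, hb0, h0⟩
    have haA : a ∉ Afam l' := Set.disjoint_left.mp (hdA k l' hkl') hk
    have hR : C.R a b' = ⊥ := (hsep l').2.2.2.2.2.2 a haA b' hb'
    have hzd : C.NoZeroDiv (C.sig a b') := hz1 l' a haA b' hb'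
    refine le_antisymm ?_ bot_le
    calc c.2 a = C.up c.1 a := by rw [hc.1]
    _ ≤ C.limp (C.sig a b') (C.R a b') (c.1 b') := iInf_le _ b'
    _ = ⊥ := by rw [hR]; exact C.limp_bot_of_noZeroDiv hzd hcb'
  have h1' : c.1 = fun _ => (⊤ : L) := by rw [← hc.2, h2, C.down_bot_fun]
  exact Prod.ext h1' h2

lemma supp_of_mem (hd : C.SubcontextDecomposition Afam Bfam)
    {c : (B → L) × (A → L)} (hc : c ∈ C.concepts) (htop : c ≠ topC)
    {l : Λ} {b1 : B} (hb1 : b1 ∈ Bfam l) (h1 : c.1 b1 ≠ ⊥) :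
    ∀ b ∉ Bfam l, c.1 b = ⊥ := by
  intro b hb
  by_contra hcb
  have : b ∈ ⋃ k, Bfam k := hd.2.2.2.2.2.1 ▸ Set.mem_univ b
  obtain ⟨m, hm⟩ := Set.mem_iUnion.mp this
  have hlm : l ≠ m := fun h => hb (h ▸ hm)
  exact htop (C.eq_topC_of_two_blocks hd hc hlm.symm hm hb1 hcb h1)

lemma block_decomposition_of_subcontext [Nonempty A] (hn : C.Normalized)
    (hd : C.SubcontextDecomposition Afam Bfam) :
    C.BlockDecomposition (fun l => C.KP (Bfam l)) := by
  obtain ⟨hne, hsep, hdA, hdB, hUA, hUB, hz1, hz2⟩ := hd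
  have hd' : C.SubcontextDecomposition Afam Bfam :=
    ⟨hne, hsep, hdA, hdB, hUA, hUB, hz1, hz2⟩
  -- in each subcontext there is an attribute concept witness
  have hwit : ∀ l : Λ, ∃ c, c ∈ C.concepts ∧ (∀ b ∉ Bfam l, c.1 b = ⊥) ∧
      c ≠ topC ∧ c ≠ botC ∧ ∃ b ∈ Bfam l, c.1 b ≠ ⊥ := by
    intro l
    obtain ⟨a, ha, b, hb, hab⟩ := (hsep l).2.2.2.2.1
    refine ⟨C.attrConcept a ⊤, C.attrConcept_mem a ⊤, ?_, C.attrConcept_top_ne_topC hn a,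
      C.attrConcept_top_ne_botC hn a, b, hb, ?_⟩
    · intro b' hb'
      rw [C.attrConcept_top_fst]
      exact (hsep l).2.2.2.2.2.1 a ha b' hb'
    · rw [C.attrConcept_top_fst]; exact hab
  refine ⟨hne, ?_, ?_, ?_⟩
  · -- each KP (Bfam l) is a block
    intro l
    refine ⟨C.KP_subset hn _, ?_, ?_, ?_, ?_⟩
    · -- KP (Bfam l) ≠ concepts
      obtain ⟨b', hb'⟩ : ∃ b', b' ∉ Bfam l := by
        by_contra h
        push_neg at h
        exact (hsep l).2.2.2.1 (Set.eq_univ_of_forall h)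
      have : b' ∈ ⋃ k, Bfam k := hUB ▸ Set.mem_univ b'
      obtain ⟨m, hm⟩ := Set.mem_iUnion.mp this
      have hml : m ≠ l := fun h => hb' (h ▸ hm)
      obtain ⟨c, hcm, hsupp, hct, hcb, b'', hb'', hcb''⟩ := hwit m
      intro hEq
      have hEq' : C.KP (Bfam l) = C.concepts := hEq
      have hcK : c ∈ C.KP (Bfam l) := hEq'.symm ▸ hcm
      rcases C.mem_KP_elim hcK with h | h | h
      · exact hct h
      · exact hcb h
      · exact hcb'' (h.2 b'' (Set.disjoint_left.mp (hdB m l hml) hb''))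
    · -- nonempty besides top and bottom
      obtain ⟨c, hcm, hsupp, hct, hcb, _⟩ := hwit l
      refine ⟨c, C.mem_KP_of_supp hcm hsupp, ?_⟩
      simp only [Set.mem_insert_iff, Set.mem_singleton_iff]
      tauto
    · -- closed under cmeet and cjoin
      intro c hc d hdK
      constructor
      · -- cmeet
        rcases C.mem_KP_elim hc with h | hrest
        · subst h
          rw [C.cmeet_topC_left (C.KP_subset hn _ hdK)]
          exact hdK
        rcases C.mem_KP_elim hdK with h | hrest'
        · subst h
          rw [C.cmeet_topC_right (C.KP_subset hn _ hc)]
          exact hc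
        have hcsupp : ∀ b ∉ Bfam l, c.1 b = ⊥ := by
          rcases hrest with h | h
          · subst h; intro b _; rfl
          · exact h.2
        have hcm : c ∈ C.concepts := C.KP_subset hn _ hc
        have hdm : d ∈ C.concepts := C.KP_subset hn _ hdK
        refine C.mem_KP_of_supp (C.cmeet_mem hcm hdm) ?_
        intro b hb
        show c.1 b ⊓ d.1 b = ⊥
        rw [hcsupp b hb]
        exact bot_inf_eq _
      · -- cjoin
        rcases C.mem_KP_elim hc with h | h | h
        · subst h; rw [C.cjoin_topC_left]; exact C.topC_mem_KP _
        · subst h; rw [C.cjoin_botC_left (C.KP_subset hn _ hdK)]; exact hdK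
        rcases C.mem_KP_elim hdK with h' | h' | h'
        · subst h'; rw [C.cjoin_topC_right]; exact C.topC_mem_KP _
        · subst h'; rw [C.cjoin_botC_right (C.KP_subset hn _ hc)]; exact hc
        by_cases hcb : c = botC
        · subst hcb; rw [C.cjoin_botC_left h'.1]; exact hdK
        obtain ⟨b1, hb1⟩ := C.extent_ne_bot h.1 hcb
        have hb1B : b1 ∈ Bfam l := by
          by_contra hh
          exact hb1 (h.2 b1 hh)
        set e := C.cjoin c d with he
        have hem : e ∈ C.concepts := C.cjoin_mem h.1 h'.1
        have hce : cle c e := C.cle_cjoin_left h.1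
        have heb1 : e.1 b1 ≠ ⊥ := fun hh =>
          hb1 (le_antisymm (le_of_le_of_eq (hce b1) hh) bot_le)
        by_cases het : e = topC
        · rw [het]; exact C.topC_mem_KP _
        · exact C.mem_KP_of_supp hem (C.supp_of_mem hd' hem het hb1B heb1)
    · -- comparability closure
      intro k hk c hcm hcomp hcnot
      have hknot : k ∉ ({topC, botC} : Set ((B → L) × (A → L))) := hk.2
      rcases C.mem_KP_elim hk.1 with h | h | h
      · exact absurd (Or.inl h) (by simpa using hknot)
      · exact absurd (Or.inr h) (by simpa using hknot)
      have hkbot : k ≠ botC := fun hh => hknot (by simp [hh])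
      have hcnot' : c ≠ topC := fun hh => hcnot (by simp [hh])
      obtain ⟨b1, hb1⟩ := C.extent_ne_bot h.1 hkbot
      have hb1B : b1 ∈ Bfam l := by
        by_contra hh
        exact hb1 (h.2 b1 hh)
      rcases hcomp with hkc | hck
      · -- k ≤ c
        have hcb1 : c.1 b1 ≠ ⊥ := fun hh =>
          hb1 (le_antisymm (le_of_le_of_eq (hkc b1) hh) bot_le)
        exact C.mem_KP_of_supp hcm (C.supp_of_mem hd' hcm hcnot' hb1B hcb1)
      · -- c ≤ k
        refine C.mem_KP_of_supp hcm ?_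
        intro b hb
        exact le_antisymm (le_of_le_of_eq (hck b) (h.2 b hb)) bot_le
  · -- pairwise intersections
    intro l m hlm c hc
    by_contra hcnot
    have h1 := C.mem_KP_elim hc.1
    have h2 := C.mem_KP_elim hc.2
    have hct : c ≠ topC := fun hh => hcnot (by simp [hh])
    have hcb : c ≠ botC := fun hh => hcnot (by simp [hh])
    rcases h1 with h | h | h
    · exact hct h
    · exact hcb h
    rcases h2 with h' | h' | h'
    · exact hct h'
    · exact hcb h'
    obtain ⟨b1, hb1⟩ := C.extent_ne_bot h.1 hcb
    have hb1l : b1 ∈ Bfam l := by by_contra hh; exact hb1 (h.2 b1 hh)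
    have hb1m : b1 ∈ Bfam m := by by_contra hh; exact hb1 (h'.2 b1 hh)
    exact Set.disjoint_left.mp (hdB l m hlm) hb1l hb1m
  · -- union is all concepts
    apply Set.eq_of_subset_of_subset
    · exact Set.iUnion_subset fun l => C.KP_subset hn _
    · intro c hcm
      obtain ⟨l0⟩ := hne
      by_cases hct : c = topC
      · exact Set.mem_iUnion.mpr ⟨l0, hct ▸ C.topC_mem_KP _⟩
      by_cases hcb : c = botC
      · exact Set.mem_iUnion.mpr ⟨l0, hcb ▸ C.botC_mem_KP _⟩
      obtain ⟨b1, hb1⟩ := C.extent_ne_bot hcm hcb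
      have : b1 ∈ ⋃ k, Bfam k := hUB ▸ Set.mem_univ b1
      obtain ⟨l, hl⟩ := Set.mem_iUnion.mp this
      exact Set.mem_iUnion.mpr
        ⟨l, C.mem_KP_of_supp hcm (C.supp_of_mem hd' hcm hct hl hb1)⟩

end Forward

section Reverse

lemma attrConcept_ne_topC [Nonempty A] (hn : C.Normalized) {a : A} {x : L} (hx : x ≠ ⊥) :
    C.attrConcept a x ≠ topC := by
  intro h
  obtain ⟨bz, hbz⟩ := hn.2.1 a
  have h1 := congrFun (congrArg Prod.fst h) bz
  simp only [C.attrConcept_fst, hbz, topC] at h1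
  exact hx (le_antisymm (C.rimp_eq_top_iff.mp h1) bot_le)

lemma cle_cmeet_left (c d : (B → L) × (A → L)) : cle (C.cmeet c d) c := inf_le_left

lemma cle_cmeet_right (c d : (B → L) × (A → L)) : cle (C.cmeet c d) d := inf_le_right

lemma subcontext_decomposition_of_block [Nonempty A] (hn : C.Normalized)
    {Λ : Type*} {K : Λ → Set ((B → L) × (A → L))} (hbd : C.BlockDecomposition K) :
    C.SubcontextDecomposition (fun l => {a | C.attrConcept a ⊤ ∈ K l})
      (fun l => {b | C.objConcept b ⊤ ∈ K l}) := by
  classical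
  obtain ⟨hne, hblk, hint, huni⟩ := hbd
  set TB : Set ((B → L) × (A → L)) := {topC, botC} with hTBdef
  have hTB : ∀ c : (B → L) × (A → L), c ≠ topC → c ≠ botC → c ∉ TB := by
    intro c h1 h2 hc
    simp only [hTBdef, Set.mem_insert_iff, Set.mem_singleton_iff] at hc
    tauto
  have hcaN : ∀ a : A, C.attrConcept a ⊤ ∉ TB := fun a =>
    hTB _ (C.attrConcept_top_ne_topC hn a) (C.attrConcept_top_ne_botC hn a)
  have hdbN : ∀ b : B, C.objConcept b ⊤ ∉ TB := fun b =>
    hTB _ (C.objConcept_top_ne_topC hn b) (C.objConcept_top_ne_botC hn b)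
  have huniq : ∀ {c : (B → L) × (A → L)} {l m : Λ},
      c ∈ K l → c ∈ K m → c ∉ TB → l = m := by
    intro c l m h1 h2 hno
    by_contra h
    exact hno (hint l m h ⟨h1, h2⟩)
  have hcov : ∀ c ∈ C.concepts, ∃ l, c ∈ K l := by
    intro c hc
    have : c ∈ ⋃ l, K l := huni.symm ▸ hc
    exact Set.mem_iUnion.mp this
  have hclos : ∀ (l : Λ) (k : (B → L) × (A → L)), k ∈ K l → k ∉ TB →
      ∀ c ∈ C.concepts, (cle k c ∨ cle c k) → c ∉ TB → c ∈ K l := by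
    intro l k hk hkN c hc hcomp hcN
    exact (hblk l).2.2.2.2 k ⟨hk, hkN⟩ c hc hcomp hcN
  -- every a belongs to some A_l, uniquely
  have hAcov : ∀ a : A, ∃ l, C.attrConcept a ⊤ ∈ K l :=
    fun a => hcov _ (C.attrConcept_mem a ⊤)
  have hBcov : ∀ b : B, ∃ l, C.objConcept b ⊤ ∈ K l :=
    fun b => hcov _ (C.objConcept_mem b ⊤)
  -- every block contains some attribute concept `c_a`
  have hrep : ∀ l : Λ, ∃ a : A, C.attrConcept a ⊤ ∈ K l := by
    intro l
    obtain ⟨c, hcK, hcN⟩ := (hblk l).2.2.1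
    have hcm : c ∈ C.concepts := (hblk l).1 hcK
    have hct : c ≠ topC := fun hh => hcN (by simp [hTBdef, hh])
    have hcb : c ≠ botC := fun hh => hcN (by simp [hTBdef, hh])
    obtain ⟨a, ha⟩ := C.intent_ne_bot hcm hct
    set e := C.attrConcept a (c.2 a) with he
    have hem : e ∈ C.concepts := C.attrConcept_mem a _
    have hce : cle c e := C.cle_attrConcept_of_intent hcm a
    obtain ⟨b0, hb0⟩ := C.extent_ne_bot hcm hcb
    have heb : e ≠ botC := by
      intro hh
      have := congrFun (congrArg Prod.fst hh) b0
      exact hb0 (le_antisymm (le_of_le_of_eq (hce b0) this) bot_le)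
    have het : e ≠ topC := C.attrConcept_ne_topC hn ha
    have heK : e ∈ K l := hclos l c hcK hcN e hem (Or.inl hce) (hTB e het heb)
    exact ⟨a, hclos l e heK (hTB e het heb) _ (C.attrConcept_mem a ⊤)
      (Or.inr (C.cle_attrConcept_top a _)) (hcaN a)⟩
  -- separability: related pairs live in the same subcontext
  have hsep : ∀ (l : Λ) (a : A), C.attrConcept a ⊤ ∈ K l →
      ∀ b : B, C.objConcept b ⊤ ∉ K l → C.R a b = ⊥ := by
    intro l a haK b hbK
    by_contra hR
    obtain ⟨m, hm⟩ := hBcov b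
    have hml : m ≠ l := fun hh => hbK (hh ▸ hm)
    set m0 := C.cmeet (C.attrConcept a ⊤) (C.objConcept b ⊤) with hm0
    have hm0m : m0 ∈ C.concepts := C.cmeet_mem (C.attrConcept_mem a ⊤) (C.objConcept_mem b ⊤)
    have hm0b : m0.1 b ≠ ⊥ := by
      show (C.attrConcept a ⊤).1 b ⊓ (C.objConcept b ⊤).1 b ≠ ⊥
      rw [C.attrConcept_top_fst, C.objConcept_top_fst_self]
      simpa using hR
    have hm0bot : m0 ≠ botC := by
      intro hh
      exact hm0b (congrFun (congrArg Prod.fst hh) b)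
    have hm0top : m0 ≠ topC := by
      intro hh
      refine C.attrConcept_top_ne_topC hn a (C.eq_topC_of_le (C.attrConcept_mem a ⊤) hn ?_)
      intro b'
      exact le_of_eq_of_le (congrFun (congrArg Prod.fst hh.symm) b') (C.cle_cmeet_left _ _ b')
    have hm0N : m0 ∉ TB := hTB m0 hm0top hm0bot
    have h1 : m0 ∈ K l :=
      hclos l _ haK (hcaN a) m0 hm0m (Or.inr (C.cle_cmeet_left _ _)) hm0N
    have h2 : m0 ∈ K m :=
      hclos m _ hm (hdbN b) m0 hm0m (Or.inr (C.cle_cmeet_right _ _)) hm0N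
    exact hml (huniq h2 h1 hm0N)
  -- no zero divisors across different subcontexts
  have hzd : ∀ (l m : Λ), l ≠ m → ∀ (a : A), C.attrConcept a ⊤ ∈ K m →
      ∀ (b : B), C.objConcept b ⊤ ∈ K l → C.NoZeroDiv (C.sig a b) := by
    intro l m hlm a haK b hbK x y hx hy hcj
    have hbKm : C.objConcept b ⊤ ∉ K m := by
      intro hh
      exact hlm (huniq hbK hh (hdbN b))
    have hR : C.R a b = ⊥ := hsep m a haK b hbKm
    have hrb : C.rimp (C.sig a b) ⊥ x ≠ ⊥ := C.rimp_ne_bot_of_conj_eq_bot hy hcj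
    set e := C.attrConcept a x with he
    have hem : e ∈ C.concepts := C.attrConcept_mem a x
    have heb' : e.1 b ≠ ⊥ := by
      rw [he, C.attrConcept_fst]
      simpa [hR] using hrb
    have hebot : e ≠ botC := fun hh => heb' (congrFun (congrArg Prod.fst hh) b)
    have hetop : e ≠ topC := C.attrConcept_ne_topC hn hx
    have heN : e ∉ TB := hTB e hetop hebot
    have heK : e ∈ K m :=
      hclos m _ haK (hcaN a) e hem (Or.inl (C.cle_attrConcept_top a x)) heN
    set m1 := C.cmeet e (C.objConcept b ⊤) with hm1
    have hm1m : m1 ∈ C.concepts := C.cmeet_mem hem (C.objConcept_mem b ⊤)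
    have hm1b : m1.1 b ≠ ⊥ := by
      show e.1 b ⊓ (C.objConcept b ⊤).1 b ≠ ⊥
      rw [C.objConcept_top_fst_self]
      simpa using heb'
    have hm1bot : m1 ≠ botC := fun hh => hm1b (congrFun (congrArg Prod.fst hh) b)
    have hm1top : m1 ≠ topC := by
      intro hh
      refine C.objConcept_top_ne_topC hn b (C.eq_topC_of_le (C.objConcept_mem b ⊤) hn ?_)
      intro b'
      exact le_of_eq_of_le (congrFun (congrArg Prod.fst hh.symm) b') (C.cle_cmeet_right _ _ b')
    have hm1N : m1 ∉ TB := hTB m1 hm1top hm1bot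
    have h1 : m1 ∈ K m := hclos m e heK heN m1 hm1m (Or.inr (C.cle_cmeet_left _ _)) hm1N
    have h2 : m1 ∈ K l := hclos l _ hbK (hdbN b) m1 hm1m (Or.inr (C.cle_cmeet_right _ _)) hm1N
    exact hlm (huniq h2 h1 hm1N)
  -- there exist at least two blocks
  have htwo : ∀ l : Λ, ∃ m : Λ, m ≠ l := by
    intro l
    by_contra h
    push_neg at h
    have : ⋃ m, K m = K l := by
      apply Set.eq_of_subset_of_subset
      · exact Set.iUnion_subset fun m => (h m) ▸ le_rfl
      · intro c hc; exact Set.mem_iUnion.mpr ⟨l, hc⟩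
    exact (hblk l).2.1 (this ▸ huni)
  -- witnesses inside each subcontext
  have hwit : ∀ l : Λ, ∃ a : A, C.attrConcept a ⊤ ∈ K l ∧
      ∃ b : B, C.objConcept b ⊤ ∈ K l ∧ C.R a b ≠ ⊥ := by
    intro l
    obtain ⟨a, ha⟩ := hrep l
    obtain ⟨b, hb⟩ := hn.1 a
    refine ⟨a, ha, b, ?_, hb⟩
    by_contra hh
    exact hb (hsep l a ha b hh)
  refine ⟨hne, ?_, ?_, ?_, ?_, ?_, ?_, ?_⟩
  · -- separable subcontexts
    intro l
    obtain ⟨a, ha, b, hb, hab⟩ := hwit l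
    obtain ⟨m, hml⟩ := htwo l
    obtain ⟨a', ha', b', hb', _⟩ := hwit m
    refine ⟨⟨a, ha⟩, ⟨b, hb⟩, ?_, ?_, ⟨a, ha, b, hb, hab⟩, ?_, ?_⟩
    · intro hu
      have hu' : {a | C.attrConcept a ⊤ ∈ K l} = (Set.univ : Set A) := hu
      have : a' ∈ {a | C.attrConcept a ⊤ ∈ K l} := hu'.symm ▸ Set.mem_univ a'
      exact hml (huniq ha' this (hcaN a'))
    · intro hu
      have hu' : {b | C.objConcept b ⊤ ∈ K l} = (Set.univ : Set B) := hu
      have : b' ∈ {b | C.objConcept b ⊤ ∈ K l} := hu'.symm ▸ Set.mem_univ b'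
      exact hml (huniq hb' this (hdbN b'))
    · intro a0 ha0 b0 hb0
      exact hsep l a0 ha0 b0 hb0
    · intro a0 ha0 b0 hb0
      obtain ⟨m0, hm0⟩ := hAcov a0
      have hm0l : m0 ≠ l := fun hh => ha0 (hh ▸ hm0)
      have : C.objConcept b0 ⊤ ∉ K m0 := fun hh => hm0l (huniq hh hb0 (hdbN b0))
      exact hsep m0 a0 hm0 b0 this
  · -- A-family pairwise disjoint
    intro l m hlm
    rw [Set.disjoint_left]
    intro a hal ham
    exact hlm (huniq hal ham (hcaN a))
  · -- B-family pairwise disjoint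
    intro l m hlm
    rw [Set.disjoint_left]
    intro b hbl hbm
    exact hlm (huniq hbl hbm (hdbN b))
  · exact Set.eq_univ_of_forall fun a => Set.mem_iUnion.mpr (hAcov a)
  · exact Set.eq_univ_of_forall fun b => Set.mem_iUnion.mpr (hBcov b)
  · -- zero divisors, first clause
    intro l a ha b hb
    obtain ⟨m, hm⟩ := hAcov a
    have hml : l ≠ m := fun hh => ha (hh ▸ hm)
    exact hzd l m hml a hm b hb
  · -- zero divisors, second clause
    intro l a ha b hb
    obtain ⟨m, hm⟩ := hBcov b
    have hml : m ≠ l := fun hh => hb (hh ▸ hm)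
    exact hzd m l hml a ha b hm

end Reverse

section Transfer

universe uu

lemma subcontext_decomposition_ulift {Λ : Type*} {Afam : Λ → Set A} {Bfam : Λ → Set B}
    (hd : C.SubcontextDecomposition Afam Bfam) :
    C.SubcontextDecomposition (fun l : ULift.{uu} Λ => Afam l.down)
      (fun l : ULift.{uu} Λ => Bfam l.down) := by
  obtain ⟨hne, hsep, hdA, hdB, hUA, hUB, hz1, hz2⟩ := hd
  refine ⟨⟨ULift.up hne.some⟩, fun l => hsep l.down,
    fun l m h => hdA l.down m.down (fun e => h (ULift.down_injective e)),
    fun l m h => hdB l.down m.down (fun e => h (ULift.down_injective e)), ?_, ?_,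
    fun l a ha b hb => hz1 l.down a ha b hb,
    fun l a ha b hb => hz2 l.down a ha b hb⟩
  · apply Set.eq_univ_of_forall
    intro a
    have : a ∈ ⋃ l, Afam l := hUA.symm ▸ Set.mem_univ a
    obtain ⟨l, hl⟩ := Set.mem_iUnion.mp this
    exact Set.mem_iUnion.mpr ⟨ULift.up l, hl⟩
  · apply Set.eq_univ_of_forall
    intro b
    have : b ∈ ⋃ l, Bfam l := hUB.symm ▸ Set.mem_univ b
    obtain ⟨l, hl⟩ := Set.mem_iUnion.mp this
    exact Set.mem_iUnion.mpr ⟨ULift.up l, hl⟩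

end Transfer

end Aux

universe x1 x2 x3 x4

lemma subcontext_decomposition_reindex {L : Type x1} [CompleteLattice L] {I : Type x2}
    {A : Type x3} {B : Type x4} (C : FCAContext L I A B)
    {Λ : Type*} {Afam : Λ → Set A} {Bfam : Λ → Set B}
    (hd : C.SubcontextDecomposition Afam Bfam) :
    ∃ (Λ' : Type x3) (Af' : Λ' → Set A) (Bf' : Λ' → Set B),
      C.SubcontextDecomposition Af' Bf' := by
  classical
  refine ⟨↥(Set.range Afam), ?_⟩
  obtain ⟨hne, hsep, hdA, hdB, hUA, hUB, hz1, hz2⟩ := hd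
  have hinj : Function.Injective Afam := by
    intro l m h
    by_contra hlm
    obtain ⟨a, ha⟩ := (hsep l).1
    exact Set.disjoint_left.mp (hdA l m hlm) ha (h ▸ ha)
  have hchoose : ∀ S : ↥(Set.range Afam), Afam S.property.choose = S.val :=
    fun S => S.property.choose_spec
  refine ⟨fun S => Afam S.property.choose, fun S => Bfam S.property.choose,
    ⟨Set.range_nonempty_iff_nonempty.mpr hne |>.to_subtype, fun S => hsep _, ?_, ?_, ?_, ?_,
    fun S a ha b hb => hz1 _ a ha b hb, fun S a ha b hb => hz2 _ a ha b hb⟩⟩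
  · intro S T hST
    refine hdA _ _ ?_
    intro h
    exact hST (Subtype.ext (by rw [← hchoose S, ← hchoose T, h]))
  · intro S T hST
    refine hdB _ _ ?_
    intro h
    exact hST (Subtype.ext (by rw [← hchoose S, ← hchoose T, h]))
  · apply Set.eq_univ_of_forall
    intro a
    have : a ∈ ⋃ l, Afam l := hUA.symm ▸ Set.mem_univ a
    obtain ⟨l, hl⟩ := Set.mem_iUnion.mp this
    refine Set.mem_iUnion.mpr ⟨⟨Afam l, ⟨l, rfl⟩⟩, ?_⟩
    show a ∈ Afam _
    rw [hinj (hchoose ⟨Afam l, ⟨l, rfl⟩⟩)]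
    exact hl
  · apply Set.eq_univ_of_forall
    intro b
    have : b ∈ ⋃ l, Bfam l := hUB.symm ▸ Set.mem_univ b
    obtain ⟨l, hl⟩ := Set.mem_iUnion.mp this
    refine Set.mem_iUnion.mpr ⟨⟨Afam l, ⟨l, rfl⟩⟩, ?_⟩
    show b ∈ Bfam _
    rw [hinj (hchoose ⟨Afam l, ⟨l, rfl⟩⟩)]
    exact hl


end FCAContext

universe u u' v w

/-- Let `(A,B,R,σ)` be a normalized context whose concept lattice
satisfies the ascending chain condition. Then `(A,B,R,σ)` has a decomposition into
independent subcontexts if and only if the concept lattice has a decomposition into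
independent blocks. -/
theorem FCAContext.subcontext_decomposition_iff_block_decomposition
    {L : Type u} {I : Type u'} {A : Type v} {B : Type w}
    [CompleteLattice L] [Finite I] [Nonempty I]
    [Nonempty A] [Nonempty B] (C : FCAContext L I A B)
    (hn : C.Normalized) (hacc : C.ACC) :
    (∃ (Λ : Type (max v w)) (Afam : Λ → Set A) (Bfam : Λ → Set B),
      C.SubcontextDecomposition Afam Bfam) ↔
    (∃ (Λ : Type (max u v w)) (K : Λ → Set ((B → L) × (A → L))),
      C.BlockDecomposition K) := by
  constructor
  · rintro ⟨Λ0, Afam, Bfam, hd⟩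
    have hd' : C.SubcontextDecomposition (fun l : ULift.{u} Λ0 => Afam l.down)
        (fun l : ULift.{u} Λ0 => Bfam l.down) := C.subcontext_decomposition_ulift hd
    exact ⟨ULift.{u} Λ0, _, C.block_decomposition_of_subcontext hn hd'⟩
  · rintro ⟨Λb, K, hbd⟩
    have hd := C.subcontext_decomposition_of_block hn hbd
    obtain ⟨Λ', Af', Bf', hd'⟩ := C.subcontext_decomposition_reindex hd
    have hd2 : C.SubcontextDecomposition (fun l : ULift.{w} Λ' => Af' l.down)
        (fun l : ULift.{w} Λ' => Bf' l.down) := C.subcontext_decomposition_ulift hd'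
    exact ⟨ULift.{w} Λ', _, _, hd2⟩
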